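/- Suppose functions $c_k$ on star-shaped domains in $\mathbb{R}^{2n}$ satisfy monotonicity under inclusion and $c_k(E(a_1,\ldots,a_n)) = M_k(a_1,\ldots,a_n)$. Let $\Omega \subset \mathbb{R}^n_{\ge 0}$ be the moment image of a concave toric domain with $\Sigma$ the closure of $\partial\Omega \cap \mathbb{R}^n_{>0}$, and let $v \in \mathbb{Z}_{>0}^n$ with $\sum_i v_i = k+n-1$ and $L = [v]_\Omega := \min\{\langle v,w\rangle : w \in \Sigma\}$. Then the simplex $\Omega' = \{x \in \mathbb{R}^n_{\ge 0} : \langle v, x\rangle \le L\}$ satisfies $\Omega' \subset \Omega$, and $c_k(E(L/v_1,\ldots,L/v_n)) = L$; hence $c_k(X_\Omega) \ge [v]_\Omega$. -/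

import Mathlib

open Finset

/-- `M_k(a_1,…,a_n)`: the least `L > 0` with `∑ ⌊L/a_i⌋ ≥ k`. -/
noncomputable def Mcap (n : ℕ) (a : Fin n → ℝ) (k : ℕ) : ℝ :=
  sInf {L : ℝ | 0 < L ∧ (k : ℤ) ≤ ∑ i, ⌊L / a i⌋}

/-- The ellipsoid `E(a_1,…,a_n) = {z ∈ ℂ^n : ∑ π|z_i|²/a_i ≤ 1}`. -/
noncomputable def ellipsoid (n : ℕ) (a : Fin n → ℝ) : Set (Fin n → ℂ) :=
  {z | ∑ i, Real.pi * ‖z i‖ ^ 2 / a i ≤ 1}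

/-- The toric domain `X_Ω = μ⁻¹(Ω)` where `μ(z) = π(|z_1|²,…,|z_n|²)`. -/
noncomputable def toricDomain (n : ℕ) (Ω : Set (Fin n → ℝ)) : Set (Fin n → ℂ) :=
  {z | (fun i => Real.pi * ‖z i‖ ^ 2) ∈ Ω}

/-!
The open simplex `S = {x > 0 : ⟨v, x⟩ < L}` is convex, hence connected, and by minimality of `L`
it misses the frontier of `Ω`; so as soon as `S` meets `Ω` it lies in `Ω`, and since `Ω` is closed
so does the closed simplex. It does meet `Ω`: concavity makes `Ω` star-shaped about the origin
inside the orthant (if `s • x ∉ Ω` with `s ≤ 1`, then `x` lies between `s • x` and a far point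
`T • x ∉ Ω` of the same ray, so `x ∉ Ω` by convexity of the complement), hence small multiples of a
positive point of `Ω` lie in `S ∩ Ω`.

The closed simplex is the moment image of `E(L/v_1, …, L/v_n)`, whose capacity `M_k` is `L`:
`∑ ⌊T v_i / L⌋` is at most `∑ (v_i - 1) = k - 1` for `T < L` and equals `∑ v_i ≥ k` at `T = L`.
Monotonicity of `c_k` under `E ⊆ X_Ω` concludes.
-/

open Set Bornology Filter

theorem IsPreconnected.subset_of_disjoint_frontier {X : Type*} [TopologicalSpace X]
    {s t : Set X} (hs : IsPreconnected s) (hst : (s ∩ t).Nonempty)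
    (hfront : Disjoint s (frontier t)) : s ⊆ t := by
  have hcover : s ⊆ interior t ∪ (closure t)ᶜ := fun x hxs => by
    by_cases hxt : x ∈ closure t
    · exact .inl (by_contra fun hxi => hfront.notMem_of_mem_left hxs ⟨hxt, hxi⟩)
    · exact .inr hxt
  obtain ⟨x, hxs, hxt⟩ := hst
  have hx : x ∈ interior t := (hcover hxs).resolve_right (not_not.mpr (subset_closure hxt))
  exact (hs.subset_left_of_subset_union isOpen_interior isClosed_closure.isOpen_compl
    (disjoint_compl_right.mono_left interior_subset_closure) hcover ⟨x, hxs, hx⟩).trans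
    interior_subset

section StarShaped

variable {E : Type*} [NormedAddCommGroup E] [NormedSpace ℝ E]

theorem Bornology.IsBounded.exists_smul_notMem {Ω : Set E} (hΩ : IsBounded Ω) {x : E}
    (hx : x ≠ 0) : ∃ T ≥ (1 : ℝ), T • x ∉ Ω := by
  have hray : Tendsto (fun t : ℝ => t • x) atTop (cobounded E) := by
    rw [← tendsto_norm_atTop_iff_cobounded]
    simp only [norm_smul, Real.norm_eq_abs]
    exact tendsto_abs_atTop_atTop.atTop_mul_const (norm_pos_iff.mpr hx)
  exact ((eventually_ge_atTop 1).and (hray hΩ)).exists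

theorem smul_mem_of_convex_cone_diff {K Ω : Set E} (hK : ∀ t : ℝ, 0 ≤ t → ∀ x ∈ K, t • x ∈ K)
    (hΩ : IsBounded Ω) (hconv : Convex ℝ (K \ Ω)) {x : E} (hxK : x ∈ K) (hxΩ : x ∈ Ω)
    {s : ℝ} (hs : s ∈ Icc (0 : ℝ) 1) : s • x ∈ Ω := by
  obtain rfl | hx0 := eq_or_ne x 0
  · rwa [smul_zero]
  by_contra hsx
  obtain ⟨T, hT1, hTx⟩ := hΩ.exists_smul_notMem hx0
  have hline : Convex ℝ ((fun t : ℝ => t • x) ⁻¹' (K \ Ω)) :=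
    hconv.linear_preimage (LinearMap.toSpanSingleton ℝ E x)
  have h1 := (convex_iff_ordConnected.mp hline).out ⟨hK s hs.1 x hxK, hsx⟩
    ⟨hK T (by linarith) x hxK, hTx⟩ ⟨hs.2, hT1⟩
  exact h1.2 (by simpa using hxΩ)

end StarShaped

section Simplex

variable {ι : Type*} [Fintype ι]

theorem convex_dotProduct_lt_pos (v : ι → ℝ) (L : ℝ) :
    Convex ℝ {x : ι → ℝ | (∀ i, 0 < x i) ∧ v ⬝ᵥ x < L} := by
  have hpos : Convex ℝ {x : ι → ℝ | ∀ i, 0 < x i} := by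
    simp only [ofPred_forall]
    exact convex_iInter fun i => convex_halfSpace_gt (LinearMap.proj i).isLinear 0
  exact hpos.inter (convex_halfSpace_lt ⟨dotProduct_add v, fun c => dotProduct_smul c v⟩ L)

theorem openSegment_subset_dotProduct_lt_pos {v p x : ι → ℝ} {L : ℝ}
    (hp : (∀ i, 0 < p i) ∧ v ⬝ᵥ p < L) (hx : (∀ i, 0 ≤ x i) ∧ v ⬝ᵥ x ≤ L) :
    openSegment ℝ p x ⊆ {y | (∀ i, 0 < y i) ∧ v ⬝ᵥ y < L} := by
  rintro _ ⟨a, b, ha, hb, hab, rfl⟩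
  refine ⟨fun i => ?_, ?_⟩
  · simp only [Pi.add_apply, Pi.smul_apply, smul_eq_mul]
    exact add_pos_of_pos_of_nonneg (mul_pos ha (hp.1 i)) (mul_nonneg hb.le (hx.1 i))
  · rw [dotProduct_add, dotProduct_smul, dotProduct_smul, smul_eq_mul, smul_eq_mul]
    have hL : a * L + b * L = L := by rw [← add_mul, hab, one_mul]
    linarith [mul_lt_mul_of_pos_left hp.2 ha, mul_le_mul_of_nonneg_left hx.2 hb.le]

theorem simplex_subset_of_le_dotProduct_frontier {Ω : Set (ι → ℝ)} (hΩ : IsCompact Ω)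
    (hconv : Convex ℝ ({x | ∀ i, 0 ≤ x i} \ Ω)) {v : ι → ℝ} {L : ℝ} (hL : 0 < L)
    {w : ι → ℝ} (hwΩ : w ∈ Ω) (hw : ∀ i, 0 < w i)
    (hfront : ∀ y ∈ frontier Ω, (∀ i, 0 < y i) → L ≤ v ⬝ᵥ y) :
    {x | (∀ i, 0 ≤ x i) ∧ v ⬝ᵥ x ≤ L} ⊆ Ω := by
  set S := {x : ι → ℝ | (∀ i, 0 < x i) ∧ v ⬝ᵥ x < L}
  obtain ⟨p, hpS, hpΩ⟩ : (S ∩ Ω).Nonempty := by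
    set ρ := L / (L + |v ⬝ᵥ w|)
    have hρ0 : 0 < ρ := by positivity
    have hρ1 : ρ ≤ 1 := div_le_one_of_le₀ (le_add_of_nonneg_right (abs_nonneg _)) (by positivity)
    refine ⟨ρ • w, ⟨fun i => mul_pos hρ0 (hw i), ?_⟩, smul_mem_of_convex_cone_diff
      (K := {x | ∀ i, 0 ≤ x i}) (fun t ht x hx i => mul_nonneg ht (hx i)) hΩ.isBounded hconv
      (fun i => (hw i).le) hwΩ ⟨hρ0.le, hρ1⟩⟩
    rw [dotProduct_smul, smul_eq_mul]
    calc ρ * (v ⬝ᵥ w) ≤ ρ * |v ⬝ᵥ w| := mul_le_mul_of_nonneg_left (le_abs_self _) hρ0.le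
      _ < L := by
        rw [div_mul_eq_mul_div, div_lt_iff₀ (by positivity)]
        nlinarith
  have hSΩ : S ⊆ Ω := (convex_dotProduct_lt_pos v L).isPreconnected.subset_of_disjoint_frontier
    ⟨p, hpS, hpΩ⟩ (disjoint_left.mpr fun y hyS hyF => hyS.2.not_ge (hfront y hyF hyS.1))
  intro x hx
  rw [← hΩ.isClosed.closure_eq]
  exact closure_mono ((openSegment_subset_dotProduct_lt_pos hpS hx).trans hSΩ)
    (segment_subset_closure_openSegment (right_mem_segment ℝ p x))

end Simplex

theorem Mcap_div_natCast {n : ℕ} (hn : 0 < n) {k : ℕ} {v : Fin n → ℕ} (hv : ∀ i, 0 < v i)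
    (hsum : ∑ i, v i = k + n - 1) {L : ℝ} (hL : 0 < L) :
    Mcap n (fun i => L / v i) k = L := by
  have hsumℤ : ∑ i, (v i : ℤ) = k + n - 1 := by
    rw [← Nat.cast_sum, hsum]
    omega
  refine IsLeast.csInf_eq ⟨⟨hL, ?_⟩, fun T ⟨_, hTk⟩ => ?_⟩
  · simp only [div_div_eq_mul_div, mul_div_cancel_left₀ _ hL.ne', Int.floor_natCast, hsumℤ]
    omega
  beta_reduce at hTk
  by_contra! hTL
  have hfloor : ∀ i, ⌊T / (L / v i)⌋ ≤ v i - 1 := fun i => by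
    have hlt : T / (L / v i) < ((v i : ℤ) : ℝ) := by
      rw [div_div_eq_mul_div, div_lt_iff₀ hL, Int.cast_natCast, mul_comm]
      exact mul_lt_mul_of_pos_left hTL (Nat.cast_pos.mpr (hv i))
    exact Int.le_sub_one_of_lt (Int.floor_lt.mpr hlt)
  have hle := sum_le_sum fun i (_ : i ∈ Finset.univ) => hfloor i
  rw [sum_sub_distrib, hsumℤ] at hle
  simp only [sum_const, card_univ, Fintype.card_fin, nsmul_eq_mul, mul_one] at hle
  omega

theorem toricDomain_mono {n : ℕ} {Ω Ω' : Set (Fin n → ℝ)} (h : Ω ⊆ Ω') :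
    toricDomain n Ω ⊆ toricDomain n Ω' := fun _ hz => h hz

theorem ellipsoid_div_eq_toricDomain {n : ℕ} (v : Fin n → ℝ) {L : ℝ} (hL : 0 < L) :
    ellipsoid n (fun i => L / v i) = toricDomain n {x | (∀ i, 0 ≤ x i) ∧ v ⬝ᵥ x ≤ L} := by
  ext z
  have hsum : ∑ i, Real.pi * ‖z i‖ ^ 2 / (L / v i) = (v ⬝ᵥ fun i => Real.pi * ‖z i‖ ^ 2) / L := by
    simp only [dotProduct, sum_div, div_div_eq_mul_div, mul_comm]
  simp only [ellipsoid, toricDomain, mem_ofPred_eq, hsum, div_le_one hL]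
  exact (and_iff_right fun i => by positivity).symm

theorem stmt17_general (n : ℕ) (hn : 0 < n)
    (c : ℕ → Set (Fin n → ℂ) → ℝ)
    (hmono : ∀ (k : ℕ) (X X' : Set (Fin n → ℂ)), X ⊆ X' → c k X ≤ c k X')
    (hell : ∀ (k : ℕ) (a : Fin n → ℝ), (∀ i, 0 < a i) →
        c k (ellipsoid n a) = Mcap n a k)
    (Ω : Set (Fin n → ℝ)) (hΩc : IsCompact Ω)
    (hconc : Convex ℝ ({x : Fin n → ℝ | ∀ i, 0 ≤ x i} \ Ω))
    (k : ℕ)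
    (v : Fin n → ℕ) (hv : ∀ i, 0 < v i) (hsum : ∑ i, v i = k + n - 1)
    (L : ℝ) (hLpos : 0 < L)
    (hL : IsLeast {t : ℝ | ∃ w ∈ closure (frontier Ω ∩ {x | ∀ i, 0 < x i}),
        t = ∑ i, (v i : ℝ) * w i} L) :
    {x : Fin n → ℝ | (∀ i, 0 ≤ x i) ∧ ∑ i, (v i : ℝ) * x i ≤ L} ⊆ Ω ∧
    c k (ellipsoid n (fun i => L / (v i : ℝ))) = L ∧
    L ≤ c k (toricDomain n Ω) := by
  obtain ⟨⟨w, hw, -⟩, hLle⟩ := hL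
  obtain ⟨w₀, hw₀, hw₀pos⟩ := closure_nonempty_iff.mp ⟨w, hw⟩
  have hsimplex : {x : Fin n → ℝ | (∀ i, 0 ≤ x i) ∧ ∑ i, (v i : ℝ) * x i ≤ L} ⊆ Ω :=
    simplex_subset_of_le_dotProduct_frontier hΩc hconc hLpos
      (hΩc.isClosed.frontier_subset hw₀) hw₀pos
      fun y hy hypos => hLle ⟨y, subset_closure ⟨hy, hypos⟩, rfl⟩
  have hcap : c k (ellipsoid n (fun i => L / (v i : ℝ))) = L := by
    rw [hell k _ fun i => div_pos hLpos (Nat.cast_pos.mpr (hv i)),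
      Mcap_div_natCast hn hv hsum hLpos]
  refine ⟨hsimplex, hcap, hcap ▸ hmono k _ _ ?_⟩
  rw [ellipsoid_div_eq_toricDomain _ hLpos]
  exact toricDomain_mono hsimplex

/-- if the `c_k` are monotone under inclusion and equal `M_k` on
ellipsoids, `Ω` is the moment image of a concave toric domain (compact, with
convex complement in the orthant), `Σ` the closure of `∂Ω ∩ ℝ^n_{>0}`,
`v ∈ ℤ_{>0}^n` with `∑ v_i = k+n-1`, and `L = [v]_Ω = min {⟨v,w⟩ : w ∈ Σ}`,
then the simplex `Ω' = {x ≥ 0 : ⟨v,x⟩ ≤ L}` satisfies `Ω' ⊆ Ω`, the capacity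
`c_k(E(L/v_1,…,L/v_n)) = L`, and hence `c_k(X_Ω) ≥ [v]_Ω`. -/
theorem stmt17 (n : ℕ) (hn : 0 < n)
    (c : ℕ → Set (Fin n → ℂ) → ℝ)
    (hmono : ∀ (k : ℕ) (X X' : Set (Fin n → ℂ)), X ⊆ X' → c k X ≤ c k X')
    (hell : ∀ (k : ℕ) (a : Fin n → ℝ), (∀ i, 0 < a i) →
        c k (ellipsoid n a) = Mcap n a k)
    (Ω : Set (Fin n → ℝ)) (hΩc : IsCompact Ω) (hΩpos : ∀ w ∈ Ω, ∀ i, 0 ≤ w i)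
    (hconc : Convex ℝ ({x : Fin n → ℝ | ∀ i, 0 ≤ x i} \ Ω))
    (k : ℕ) (hk : 0 < k)
    (v : Fin n → ℕ) (hv : ∀ i, 0 < v i) (hsum : ∑ i, v i = k + n - 1)
    (L : ℝ) (hLpos : 0 < L)
    (hL : IsLeast {t : ℝ | ∃ w ∈ closure (frontier Ω ∩ {x | ∀ i, 0 < x i}),
        t = ∑ i, (v i : ℝ) * w i} L) :
    {x : Fin n → ℝ | (∀ i, 0 ≤ x i) ∧ ∑ i, (v i : ℝ) * x i ≤ L} ⊆ Ω ∧
    c k (ellipsoid n (fun i => L / (v i : ℝ))) = L ∧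
    L ≤ c k (toricDomain n Ω) :=
  stmt17_general n hn c hmono hell Ω hΩc hconc k v hv hsum L hLpos hL
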